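/- arXiv:2303.16269 — 3 statements merged into one kernel-verified Lean document; each statement's English description precedes it below -/
import Mathlib

section
/- For every β ≥ 1, every J ∈ ℕ and all complex numbers z₁, …, z_J, one has |∑_{j=1}^J F(z_j) − F(∑_{j=1}^J z_j)| ≤ C(β,J) · ∑_{j ≠ k} |z_j|^{β−1} |z_k|, where F(z) = |z|^{β−1} z and C(β,J) depends only on β and J. -/
open Finset

lemma rpow_sub_rpow_le_mvt (γ : ℝ) (hγ : 0 ≤ γ) {x y : ℝ} (hy : 0 < y) (hxy : y ≤ x) :
    x ^ γ - y ^ γ ≤ γ * max (x ^ (γ - 1)) (y ^ (γ - 1)) * (x - y) := by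
  have hx : 0 < x := lt_of_lt_of_le hy hxy
  rcases le_total 1 γ with h1 | h1
  · have hs : (-1 : ℝ) ≤ y / x - 1 := by
      have : 0 ≤ y / x := by positivity
      linarith
    have hb := one_add_mul_self_le_rpow_one_add hs h1
    rw [show 1 + (y / x - 1) = y / x by ring] at hb
    rw [Real.div_rpow hy.le hx.le] at hb
    have hxγ : 0 < x ^ γ := Real.rpow_pos_of_pos hx γ
    have key : x ^ γ - y ^ γ ≤ γ * x ^ (γ - 1) * (x - y) := by
      have h2 : x ^ γ * (1 + γ * (y / x - 1)) ≤ y ^ γ := by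
        calc x ^ γ * (1 + γ * (y / x - 1)) ≤ x ^ γ * (y ^ γ / x ^ γ) :=
              mul_le_mul_of_nonneg_left hb hxγ.le
          _ = y ^ γ := by field_simp
      have h3 : x ^ (γ - 1) = x ^ γ / x := Real.rpow_sub_one hx.ne' γ
      have h4 : x ^ γ * (γ * (y / x - 1)) = - (γ * (x ^ γ / x) * (x - y)) := by
        field_simp; ring
      rw [mul_add, mul_one, h4] at h2
      rw [h3]; linarith
    refine key.trans ?_
    have := le_max_left (x ^ (γ - 1)) (y ^ (γ - 1))
    have hxy' : 0 ≤ x - y := by linarith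
    nlinarith [mul_le_mul_of_nonneg_left this (mul_nonneg hγ hxy')]
  · have hs : (-1 : ℝ) ≤ x / y - 1 := by
      have : 0 ≤ x / y := by positivity
      linarith
    have hb := rpow_one_add_le_one_add_mul_self hs hγ h1
    rw [show 1 + (x / y - 1) = x / y by ring] at hb
    rw [Real.div_rpow hx.le hy.le] at hb
    have hyγ : 0 < y ^ γ := Real.rpow_pos_of_pos hy γ
    have key : x ^ γ - y ^ γ ≤ γ * y ^ (γ - 1) * (x - y) := by
      have h2 : x ^ γ ≤ y ^ γ * (1 + γ * (x / y - 1)) := by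
        calc x ^ γ = y ^ γ * (x ^ γ / y ^ γ) := by field_simp
          _ ≤ y ^ γ * (1 + γ * (x / y - 1)) := mul_le_mul_of_nonneg_left hb hyγ.le
      have h3 : y ^ (γ - 1) = y ^ γ / y := Real.rpow_sub_one hy.ne' γ
      have h4 : y ^ γ * (γ * (x / y - 1)) = γ * (y ^ γ / y) * (x - y) := by
        field_simp
      rw [mul_add, mul_one, h4] at h2
      rw [h3]; linarith
    refine key.trans ?_
    have := le_max_right (x ^ (γ - 1)) (y ^ (γ - 1))
    have hxy' : 0 ≤ x - y := by linarith
    nlinarith [mul_le_mul_of_nonneg_left this (mul_nonneg hγ hxy')]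

lemma abs_rpow_sub_rpow_le_mvt (γ : ℝ) (hγ : 0 ≤ γ) {x y : ℝ} (hx : 0 < x) (hy : 0 < y) :
    |x ^ γ - y ^ γ| ≤ γ * max (x ^ (γ - 1)) (y ^ (γ - 1)) * |x - y| := by
  rcases le_total y x with h | h
  · rw [abs_of_nonneg (by linarith : (0:ℝ) ≤ x - y),
      abs_of_nonneg (sub_nonneg.2 (Real.rpow_le_rpow hy.le h hγ))]
    exact rpow_sub_rpow_le_mvt γ hγ hy h
  · rw [abs_of_nonpos (by linarith : x - y ≤ 0),
      abs_of_nonpos (sub_nonpos.2 (Real.rpow_le_rpow hx.le h hγ)), max_comm]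
    have := rpow_sub_rpow_le_mvt γ hγ hx h
    linarith

set_option maxHeartbeats 1600000 in
/-- For `F(z) = |z|^{β-1} z`, the sum of values differs from the value of the
sum by at most `C(β,J) ∑_{j≠k} |z_j|^{β-1}|z_k|`. -/
theorem F_sum_difference (β : ℝ) (hβ : 1 ≤ β) (J : ℕ) :
    ∃ C : ℝ, 0 < C ∧ ∀ z : Fin J → ℂ,
      ‖(∑ j : Fin J, ((‖z j‖ ^ (β - 1) : ℝ) : ℂ) * z j) -
          ((‖∑ j : Fin J, z j‖ ^ (β - 1) : ℝ) : ℂ) * (∑ j : Fin J, z j)‖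
        ≤ C * ∑ j : Fin J, ∑ k : Fin J,
            if j ≠ k then ‖z j‖ ^ (β - 1) * ‖z k‖ else 0 := by
  set γ := β - 1 with hγdef
  have hγ : 0 ≤ γ := by rw [hγdef]; linarith
  set Kγ : ℝ := max ((1/2 : ℝ) ^ (γ - 1)) ((3/2 : ℝ) ^ (γ - 1)) with hKdef
  have hK0 : 0 ≤ Kγ := le_trans (Real.rpow_nonneg (by norm_num) _) (le_max_left _ _)
  have hK1 : 1 ≤ Kγ := by
    rcases le_total 1 γ with h | h
    · exact le_trans (Real.one_le_rpow (by norm_num) (by linarith)) (le_max_right _ _)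
    · exact le_trans (Real.one_le_rpow_of_pos_of_le_one_of_nonpos (by norm_num) (by norm_num)
        (by linarith)) (le_max_left _ _)
  set L : ℝ := (J : ℝ) + 1 with hLdef
  have hL : 0 < L := by positivity
  have hL1 : 1 ≤ L := by
    have : (0:ℝ) ≤ (J:ℝ) := Nat.cast_nonneg J
    rw [hLdef]; linarith
  have hLγ0 : 0 ≤ L ^ (γ + 1) := Real.rpow_nonneg hL.le _
  have hC0 : 0 < 2 + 4 * L ^ (γ + 1) + 2 * γ * Kγ := by
    nlinarith [mul_nonneg hγ hK0]
  clear_value γ Kγ L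
  refine ⟨2 + 4 * L ^ (γ + 1) + 2 * γ * Kγ, hC0, ?_⟩
  intro z
  rcases isEmpty_or_nonempty (Fin J) with hE | hNE
  · simp
  obtain ⟨j₀, -, hmax⟩ := Finset.exists_max_image (univ : Finset (Fin J))
    (fun j => ‖z j‖) univ_nonempty
  have hM0 : (0:ℝ) ≤ ‖z j₀‖ := norm_nonneg _
  by_cases hM : ‖z j₀‖ = 0
  · have hz : ∀ j, z j = 0 := fun j => norm_eq_zero.1
      (le_antisymm (by simpa [hM] using hmax j (mem_univ j)) (norm_nonneg _))
    simp [hz]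
  have hMpos : (0:ℝ) < ‖z j₀‖ := lt_of_le_of_ne hM0 (Ne.symm hM)
  set S := ∑ j : Fin J, z j with hSdef
  set T := ∑ k ∈ univ.erase j₀, ‖z k‖ with hTdef
  have hT0 : 0 ≤ T := Finset.sum_nonneg fun _ _ => norm_nonneg _
  have hRs : S - z j₀ = ∑ k ∈ univ.erase j₀, z k := by
    rw [hSdef, ← Finset.add_sum_erase univ z (mem_univ j₀)]; ring
  have hR : ‖S - z j₀‖ ≤ T := by
    rw [hRs, hTdef]; exact norm_sum_le _ _
  have hTM : T ≤ (J:ℝ) * ‖z j₀‖ := by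
    calc T ≤ ∑ _k ∈ univ.erase j₀, ‖z j₀‖ :=
          Finset.sum_le_sum fun k _ => hmax k (mem_univ k)
      _ ≤ ∑ _k : Fin J, ‖z j₀‖ :=
          Finset.sum_le_sum_of_subset_of_nonneg (erase_subset _ _) (fun _ _ _ => hM0)
      _ = (J:ℝ) * ‖z j₀‖ := by simp [Finset.sum_const, Fintype.card_fin, nsmul_eq_mul]
  set Sig := ∑ j : Fin J, ∑ k : Fin J, if j ≠ k then ‖z j‖ ^ γ * ‖z k‖ else 0 with hSigdef
  clear_value S T Sig
  have hrow : ∀ j : Fin J, 0 ≤ ∑ k : Fin J, (if j ≠ k then ‖z j‖ ^ γ * ‖z k‖ else 0) :=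
    fun j => Finset.sum_nonneg fun k _ => by
      split
      · positivity
      · exact le_refl 0
  have hSigT : ‖z j₀‖ ^ γ * T ≤ Sig := by
    have h1 : (∑ k : Fin J, if j₀ ≠ k then ‖z j₀‖ ^ γ * ‖z k‖ else 0) = ‖z j₀‖ ^ γ * T := by
      rw [← Finset.sum_filter, Finset.filter_ne, hTdef, Finset.mul_sum]
    rw [← h1, hSigdef]
    exact Finset.single_le_sum (fun j _ => hrow j) (mem_univ j₀)
  have hnorm : ∀ w : ℂ, ‖(((‖w‖ ^ γ : ℝ)) : ℂ) * w‖ = ‖w‖ ^ γ * ‖w‖ := fun w => by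
    rw [norm_mul, Complex.norm_real,
      Real.norm_of_nonneg (Real.rpow_nonneg (norm_nonneg _) _)]
  have hA : (∑ j : Fin J, ((‖z j‖ ^ γ : ℝ) : ℂ) * z j) - ((‖S‖ ^ γ : ℝ) : ℂ) * S
      = (∑ k ∈ univ.erase j₀, ((‖z k‖ ^ γ : ℝ) : ℂ) * z k)
        + ((((‖z j₀‖ ^ γ : ℝ)) : ℂ) * z j₀ - ((‖S‖ ^ γ : ℝ) : ℂ) * S) := by
    rw [← Finset.add_sum_erase univ (fun k => ((‖z k‖ ^ γ : ℝ) : ℂ) * z k) (mem_univ j₀)]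
    ring
  have hB1 : ‖∑ k ∈ univ.erase j₀, ((‖z k‖ ^ γ : ℝ) : ℂ) * z k‖ ≤ ‖z j₀‖ ^ γ * T := by
    calc ‖∑ k ∈ univ.erase j₀, ((‖z k‖ ^ γ : ℝ) : ℂ) * z k‖
        ≤ ∑ k ∈ univ.erase j₀, ‖((‖z k‖ ^ γ : ℝ) : ℂ) * z k‖ := norm_sum_le _ _
      _ ≤ ∑ k ∈ univ.erase j₀, ‖z j₀‖ ^ γ * ‖z k‖ := Finset.sum_le_sum fun k _ => by
          rw [hnorm]
          exact mul_le_mul_of_nonneg_right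
            (Real.rpow_le_rpow (norm_nonneg _) (hmax k (mem_univ k)) hγ) (norm_nonneg _)
      _ = ‖z j₀‖ ^ γ * T := by rw [hTdef, Finset.mul_sum]
  have hyMT : ‖S‖ ≤ ‖z j₀‖ + T := by
    have h1 : S = z j₀ + (S - z j₀) := by ring
    calc ‖S‖ = ‖z j₀ + (S - z j₀)‖ := by rw [← h1]
      _ ≤ ‖z j₀‖ + ‖S - z j₀‖ := norm_add_le _ _
      _ ≤ ‖z j₀‖ + T := by linarith [hR]
  have hdiff : ‖(((‖z j₀‖ ^ γ : ℝ)) : ℂ) * z j₀ - ((‖S‖ ^ γ : ℝ) : ℂ) * S‖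
      ≤ ‖z j₀‖ ^ γ * T + |‖z j₀‖ ^ γ - ‖S‖ ^ γ| * ‖S‖ := by
    have hid : (((‖z j₀‖ ^ γ : ℝ)) : ℂ) * z j₀ - ((‖S‖ ^ γ : ℝ) : ℂ) * S
        = (((‖z j₀‖ ^ γ : ℝ)) : ℂ) * (z j₀ - S)
          + (((‖z j₀‖ ^ γ - ‖S‖ ^ γ : ℝ)) : ℂ) * S := by
      push_cast; ring
    rw [hid]
    refine (norm_add_le _ _).trans (add_le_add ?_ ?_)
    · rw [norm_mul, Complex.norm_real,
        Real.norm_of_nonneg (Real.rpow_nonneg (norm_nonneg _) _), norm_sub_rev]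
      exact mul_le_mul_of_nonneg_left hR (Real.rpow_nonneg (norm_nonneg _) _)
    · rw [norm_mul, Complex.norm_real, Real.norm_eq_abs]
  have hterm : |‖z j₀‖ ^ γ - ‖S‖ ^ γ| * ‖S‖
      ≤ (4 * L ^ (γ + 1) + 2 * γ * Kγ) * (‖z j₀‖ ^ γ * T) := by
    have hy0 : (0:ℝ) ≤ ‖S‖ := norm_nonneg _
    have hxγ0 : (0:ℝ) ≤ ‖z j₀‖ ^ γ := Real.rpow_nonneg (norm_nonneg _) _
    rcases le_total ‖z j₀‖ (2 * T) with hc | hc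
    · have hyL : ‖S‖ ≤ L * ‖z j₀‖ := by rw [hLdef]; nlinarith [hyMT, hTM]
      have hyγ : ‖S‖ ^ γ ≤ L ^ γ * ‖z j₀‖ ^ γ := by
        calc ‖S‖ ^ γ ≤ (L * ‖z j₀‖) ^ γ := Real.rpow_le_rpow hy0 hyL hγ
          _ = L ^ γ * ‖z j₀‖ ^ γ := Real.mul_rpow hL.le (norm_nonneg _)
      have hLγ1 : 1 ≤ L ^ γ := Real.one_le_rpow hL1 hγ
      have habs : |‖z j₀‖ ^ γ - ‖S‖ ^ γ| ≤ ‖z j₀‖ ^ γ + ‖S‖ ^ γ := by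
        rw [abs_sub_le_iff]
        constructor <;> nlinarith [Real.rpow_nonneg (norm_nonneg S) γ, hxγ0]
      have hLsplit : L ^ (γ + 1) = L ^ γ * L := Real.rpow_add_one hL.ne' γ
      calc |‖z j₀‖ ^ γ - ‖S‖ ^ γ| * ‖S‖ ≤ (‖z j₀‖ ^ γ + ‖S‖ ^ γ) * ‖S‖ :=
            mul_le_mul_of_nonneg_right habs hy0
        _ ≤ (2 * (L ^ γ * ‖z j₀‖ ^ γ)) * (L * (2 * T)) := by
            refine mul_le_mul ?_ ?_ hy0 (by positivity)
            · nlinarith [mul_le_mul_of_nonneg_right hLγ1 hxγ0]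
            · calc ‖S‖ ≤ L * ‖z j₀‖ := hyL
                _ ≤ L * (2 * T) := mul_le_mul_of_nonneg_left hc hL.le
        _ = 4 * L ^ (γ + 1) * (‖z j₀‖ ^ γ * T) := by rw [hLsplit]; ring
        _ ≤ (4 * L ^ (γ + 1) + 2 * γ * Kγ) * (‖z j₀‖ ^ γ * T) := by
            nlinarith [mul_nonneg (mul_nonneg hγ hK0) (mul_nonneg hxγ0 hT0)]
    · have hylow : ‖z j₀‖ - T ≤ ‖S‖ := by
        have h1 : ‖z j₀‖ - ‖S‖ ≤ ‖z j₀ - S‖ := norm_sub_norm_le _ _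
        rw [norm_sub_rev] at h1
        linarith [hR]
      have hypos : (0:ℝ) < ‖S‖ := by linarith
      have hd : |‖z j₀‖ - ‖S‖| ≤ T := by
        have h1 : |‖z j₀‖ - ‖S‖| ≤ ‖z j₀ - S‖ := abs_norm_sub_norm_le _ _
        rw [norm_sub_rev] at h1
        linarith [hR]
      have habs := abs_rpow_sub_rpow_le_mvt γ hγ hMpos hypos
      have hMγ10 : (0:ℝ) ≤ ‖z j₀‖ ^ (γ - 1) := Real.rpow_nonneg (norm_nonneg _) _
      have hmaxb : max (‖z j₀‖ ^ (γ - 1)) (‖S‖ ^ (γ - 1)) ≤ Kγ * ‖z j₀‖ ^ (γ - 1) := by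
        refine max_le ?_ ?_
        · nlinarith [mul_le_mul_of_nonneg_right hK1 hMγ10]
        · rcases le_total 1 γ with h | h
          · have h1 : ‖S‖ ≤ (3/2) * ‖z j₀‖ := by linarith [hyMT]
            calc ‖S‖ ^ (γ - 1) ≤ ((3/2) * ‖z j₀‖) ^ (γ - 1) :=
                  Real.rpow_le_rpow (norm_nonneg _) h1 (by linarith)
              _ = (3/2 : ℝ) ^ (γ - 1) * ‖z j₀‖ ^ (γ - 1) :=
                  Real.mul_rpow (by norm_num) (norm_nonneg _)
              _ ≤ Kγ * ‖z j₀‖ ^ (γ - 1) :=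
                  mul_le_mul_of_nonneg_right (hKdef ▸ le_max_right _ _) hMγ10
          · have h1 : (1/2) * ‖z j₀‖ ≤ ‖S‖ := by linarith
            have h2 : (0:ℝ) < (1/2) * ‖z j₀‖ := by positivity
            calc ‖S‖ ^ (γ - 1) ≤ ((1/2) * ‖z j₀‖) ^ (γ - 1) :=
                  Real.rpow_le_rpow_of_nonpos h2 h1 (by linarith)
              _ = (1/2 : ℝ) ^ (γ - 1) * ‖z j₀‖ ^ (γ - 1) :=
                  Real.mul_rpow (by norm_num) (norm_nonneg _)
              _ ≤ Kγ * ‖z j₀‖ ^ (γ - 1) :=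
                  mul_le_mul_of_nonneg_right (hKdef ▸ le_max_left _ _) hMγ10
      have hMsub : ‖z j₀‖ ^ (γ - 1) * ‖z j₀‖ = ‖z j₀‖ ^ γ := by
        rw [Real.rpow_sub_one (ne_of_gt hMpos) γ, div_mul_cancel₀ _ (ne_of_gt hMpos)]
      have hy32 : ‖S‖ ≤ (3/2) * ‖z j₀‖ := by linarith [hyMT]
      calc |‖z j₀‖ ^ γ - ‖S‖ ^ γ| * ‖S‖
          ≤ (γ * (Kγ * ‖z j₀‖ ^ (γ - 1)) * T) * ((3/2) * ‖z j₀‖) := by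
            refine mul_le_mul ?_ hy32 (norm_nonneg _)
              (mul_nonneg (mul_nonneg hγ (mul_nonneg hK0 hMγ10)) hT0)
            refine habs.trans ?_
            exact mul_le_mul (mul_le_mul_of_nonneg_left hmaxb hγ) hd (abs_nonneg _)
              (mul_nonneg hγ (mul_nonneg hK0 hMγ10))
        _ = (3/2) * γ * Kγ * (‖z j₀‖ ^ (γ - 1) * ‖z j₀‖) * T := by ring
        _ = (3/2) * γ * Kγ * ‖z j₀‖ ^ γ * T := by rw [hMsub]
        _ ≤ (4 * L ^ (γ + 1) + 2 * γ * Kγ) * (‖z j₀‖ ^ γ * T) := by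
            nlinarith [mul_nonneg (mul_nonneg hγ hK0) (mul_nonneg hxγ0 hT0),
              mul_nonneg hLγ0 (mul_nonneg hxγ0 hT0)]
  calc ‖(∑ j : Fin J, ((‖z j‖ ^ γ : ℝ) : ℂ) * z j) - ((‖S‖ ^ γ : ℝ) : ℂ) * S‖
      ≤ ‖z j₀‖ ^ γ * T + (‖z j₀‖ ^ γ * T + |‖z j₀‖ ^ γ - ‖S‖ ^ γ| * ‖S‖) := by
        rw [hA]
        exact (norm_add_le _ _).trans (add_le_add hB1 hdiff)
    _ ≤ 2 * (‖z j₀‖ ^ γ * T) + (4 * L ^ (γ + 1) + 2 * γ * Kγ) * (‖z j₀‖ ^ γ * T) := by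
        linarith [hterm]
    _ = (2 + 4 * L ^ (γ + 1) + 2 * γ * Kγ) * (‖z j₀‖ ^ γ * T) := by ring
    _ ≤ (2 + 4 * L ^ (γ + 1) + 2 * γ * Kγ) * Sig := mul_le_mul_of_nonneg_left hSigT hC0.le
end

section
/- Let (f_n) and (g_n) be bounded sequences in L^r(ℝ) for some r ∈ (1,∞), such that g_n converges in L^r and almost everywhere, while f_n → 0 almost everywhere. Then ‖f_n + g_n‖_{L^r}^r = ‖f_n‖_{L^r}^r + ‖g_n‖_{L^r}^r + o(1) as n → ∞. -/
open MeasureTheory Filter ENNReal Topology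

/-! Since `g n → glim` in `L^r` and all sequences are bounded in `L^r`, replacing `g n` by `glim`
changes `‖f n + g n‖^r` and `‖g n‖^r` only by `o(1)`: `x ↦ ‖x‖^r` is uniformly continuous on
bounded sets. For the fixed function `glim` one runs the classical Brézis–Lieb argument. The
elementary inequality `|‖a + b‖^r - ‖a‖^r| ≤ ε ‖a‖^r + C_ε ‖b‖^r` shows that the positive part of
`|‖f n + glim‖^r - ‖f n‖^r - ‖glim‖^r| - ε ‖f n‖^r` is dominated by `(C_ε + 1) ‖glim‖^r` and tends
to `0` a.e.; by dominated convergence the integral of the bracket is eventually at most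
`ε sup_n ‖f n‖_r^r + o(1)`. -/

section Real

variable {r : ℝ}

theorem abs_rpow_sub_rpow_le_mul_abs_sub (hr : 1 ≤ r) {a b M : ℝ} (ha : 0 ≤ a) (hb : 0 ≤ b)
    (haM : a ≤ M) (hbM : b ≤ M) : |a ^ r - b ^ r| ≤ r * M ^ (r - 1) * |a - b| := by
  have hderiv : ∀ t ∈ Set.Icc 0 M,
      HasDerivWithinAt (fun s : ℝ => s ^ r) (r * t ^ (r - 1)) (Set.Icc 0 M) t := fun t _ =>
    (Real.hasDerivAt_rpow_const (Or.inr hr)).hasDerivWithinAt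
  have hbound : ∀ t ∈ Set.Icc 0 M, ‖r * t ^ (r - 1)‖ ≤ r * M ^ (r - 1) := by
    rintro t ⟨ht0, htM⟩
    rw [Real.norm_of_nonneg (by positivity)]
    gcongr
  simpa only [Real.norm_eq_abs] using
    (convex_Icc 0 M).norm_image_sub_le_of_norm_hasDerivWithin_le hderiv hbound ⟨hb, hbM⟩ ⟨ha, haM⟩

theorem rpow_sub_one_mul_le (hr : 1 ≤ r) {a b c d z : ℝ} (ha : 0 ≤ a) (hb : 0 ≤ b) (hc : 0 ≤ c)
    (hz : 0 ≤ z) (hac : a ≤ c * z) (hbd : b ≤ d * z) :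
    a ^ (r - 1) * b ≤ c ^ (r - 1) * d * z ^ r := by
  calc a ^ (r - 1) * b ≤ (c * z) ^ (r - 1) * (d * z) := by gcongr
    _ = c ^ (r - 1) * d * (z ^ (r - 1) * z) := by rw [Real.mul_rpow hc hz]; ring
    _ = c ^ (r - 1) * d * z ^ r := by rw [← Real.rpow_add_one' hz (by linarith), sub_add_cancel]

end Real

theorem tendsto_zero_of_forall_abs_le_mul_add {ι : Type*} {l : Filter ι} {x : ι → ℝ} (K : ℝ)
    (h : ∀ ε > 0, ∃ y : ι → ℝ, Tendsto y l (𝓝 0) ∧ ∀ᶠ i in l, |x i| ≤ ε * K + y i) :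
    Tendsto x l (𝓝 0) := by
  rw [Metric.tendsto_nhds]
  intro δ hδ
  have hK : 0 < 2 * (|K| + 1) := by positivity
  obtain ⟨y, hy, hxy⟩ := h (δ / (2 * (|K| + 1))) (div_pos hδ hK)
  have hεK : δ / (2 * (|K| + 1)) * K ≤ δ / 2 := by
    calc δ / (2 * (|K| + 1)) * K ≤ δ / (2 * (|K| + 1)) * (|K| + 1) := by
          gcongr; linarith [le_abs_self K]
      _ = δ / 2 := by field_simp
  filter_upwards [hxy, hy.eventually (gt_mem_nhds (half_pos hδ))] with i hxi hyi
  rw [Real.dist_0_eq_abs]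
  linarith

section NormedGroup

variable {E : Type*} [SeminormedAddCommGroup E] {r : ℝ}

theorem abs_norm_add_rpow_sub_norm_rpow_le (hr : 1 ≤ r) {δ : ℝ} (hδ : 0 < δ) (a b : E) :
    |‖a + b‖ ^ r - ‖a‖ ^ r| ≤
      r * (1 + δ) ^ (r - 1) * δ * ‖a‖ ^ r + r * (1 + δ⁻¹) ^ (r - 1) * ‖b‖ ^ r := by
  have hx : 0 ≤ ‖a‖ := norm_nonneg a
  have hy : 0 ≤ ‖b‖ := norm_nonneg b
  have hmv : |‖a + b‖ ^ r - ‖a‖ ^ r| ≤ r * (‖a‖ + ‖b‖) ^ (r - 1) * ‖b‖ :=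
    calc |‖a + b‖ ^ r - ‖a‖ ^ r| ≤ r * (‖a‖ + ‖b‖) ^ (r - 1) * |‖a + b‖ - ‖a‖| :=
          abs_rpow_sub_rpow_le_mul_abs_sub hr (norm_nonneg _) hx (norm_add_le a b)
            (le_add_of_nonneg_right hy)
      _ ≤ r * (‖a‖ + ‖b‖) ^ (r - 1) * ‖b‖ := by
          gcongr
          simpa using abs_norm_sub_norm_le (a + b) a
  have hsplit : (‖a‖ + ‖b‖) ^ (r - 1) * ‖b‖ ≤
      (1 + δ) ^ (r - 1) * δ * ‖a‖ ^ r + (1 + δ⁻¹) ^ (r - 1) * ‖b‖ ^ r := by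
    rcases le_or_gt ‖b‖ (δ * ‖a‖) with hsmall | hlarge
    · have := rpow_sub_one_mul_le hr (by positivity) hy (by positivity) hx
        (by linarith : ‖a‖ + ‖b‖ ≤ (1 + δ) * ‖a‖) hsmall
      have : 0 ≤ (1 + δ⁻¹) ^ (r - 1) * ‖b‖ ^ r := by positivity
      linarith
    · have hxy : ‖a‖ ≤ δ⁻¹ * ‖b‖ := by
        rw [inv_mul_eq_div, le_div_iff₀ hδ]; linarith
      have := rpow_sub_one_mul_le hr (by positivity) hy (by positivity) hy
        (by linarith : ‖a‖ + ‖b‖ ≤ (1 + δ⁻¹) * ‖b‖) (one_mul _).ge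
      have : 0 ≤ (1 + δ) ^ (r - 1) * δ * ‖a‖ ^ r := by positivity
      linarith
  calc _ ≤ r * ((‖a‖ + ‖b‖) ^ (r - 1) * ‖b‖) := by rw [← mul_assoc]; exact hmv
    _ ≤ r * ((1 + δ) ^ (r - 1) * δ * ‖a‖ ^ r + (1 + δ⁻¹) ^ (r - 1) * ‖b‖ ^ r) := by gcongr
    _ = _ := by ring

theorem exists_abs_norm_add_rpow_sub_norm_rpow_le (hr : 1 ≤ r) {ε : ℝ} (hε : 0 < ε) :
    ∃ C : ℝ, 0 ≤ C ∧ ∀ a b : E, |‖a + b‖ ^ r - ‖a‖ ^ r| ≤ ε * ‖a‖ ^ r + C * ‖b‖ ^ r := by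
  have hlim : Tendsto (fun δ : ℝ => r * (1 + δ) ^ (r - 1) * δ) (𝓝[>] 0) (𝓝 0) := by
    have : ContinuousAt (fun δ : ℝ => r * (1 + δ) ^ (r - 1) * δ) 0 := by
      fun_prop (disch := norm_num)
    simpa using this.tendsto.mono_left nhdsWithin_le_nhds
  obtain ⟨δ, hδε, hδ⟩ := ((hlim.eventually (gt_mem_nhds hε)).and self_mem_nhdsWithin).exists
  refine ⟨r * (1 + δ⁻¹) ^ (r - 1), by positivity, fun a b =>
    (abs_norm_add_rpow_sub_norm_rpow_le hr hδ a b).trans ?_⟩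
  gcongr

theorem tendsto_norm_rpow_sub_norm_rpow {ι : Type*} {l : Filter ι} (hr : 1 ≤ r) {u v : ι → E}
    {M : ℝ} (hv : ∀ i, ‖v i‖ ≤ M) (huv : Tendsto (fun i => ‖u i - v i‖) l (𝓝 0)) :
    Tendsto (fun i => ‖u i‖ ^ r - ‖v i‖ ^ r) l (𝓝 0) := by
  refine tendsto_zero_of_forall_abs_le_mul_add (M ^ r) fun ε hε => ?_
  obtain ⟨C, -, hC⟩ := exists_abs_norm_add_rpow_sub_norm_rpow_le (E := E) hr hε
  refine ⟨fun i => C * ‖u i - v i‖ ^ r, ?_, .of_forall fun i => ?_⟩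
  · simpa [Real.zero_rpow (by linarith : r ≠ 0)] using
      (huv.rpow_const (Or.inr (by linarith : (0 : ℝ) ≤ r))).const_mul C
  · calc |‖u i‖ ^ r - ‖v i‖ ^ r| ≤ ε * ‖v i‖ ^ r + C * ‖u i - v i‖ ^ r := by
          simpa using hC (v i) (u i - v i)
      _ ≤ ε * M ^ r + C * ‖u i - v i‖ ^ r := by gcongr; exact hv i

end NormedGroup

namespace MeasureTheory

variable {α E : Type*} [MeasurableSpace α] {μ : Measure α} [NormedAddCommGroup E] {r : ℝ}

theorem tendsto_integral_abs_norm_add_rpow_sub (hr : 1 ≤ r) {f : ℕ → α → E} {g : α → E}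
    (hfm : ∀ n, AEStronglyMeasurable (f n) μ) (hfi : ∀ n, Integrable (fun x => ‖f n x‖ ^ r) μ)
    {K : ℝ} (hfK : ∀ n, ∫ x, ‖f n x‖ ^ r ∂μ ≤ K)
    (hgm : AEStronglyMeasurable g μ) (hgi : Integrable (fun x => ‖g x‖ ^ r) μ)
    (hf0 : ∀ᵐ x ∂μ, Tendsto (fun n => f n x) atTop (𝓝 0)) :
    Tendsto (fun n => ∫ x, |‖f n x + g x‖ ^ r - ‖f n x‖ ^ r - ‖g x‖ ^ r| ∂μ) atTop (𝓝 0) := by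
  have hr0 : 0 ≤ r := by linarith
  refine tendsto_zero_of_forall_abs_le_mul_add K fun ε hε => ?_
  obtain ⟨C, hC0, hC⟩ := exists_abs_norm_add_rpow_sub_norm_rpow_le (E := E) hr hε
  set φ : E → E → ℝ := fun a b => |‖a + b‖ ^ r - ‖a‖ ^ r - ‖b‖ ^ r|
  have hφ_cont : Continuous φ.uncurry := by fun_prop (disch := exact hr0)
  have hφ_le : ∀ a b, φ a b ≤ ε * ‖a‖ ^ r + (C + 1) * ‖b‖ ^ r := fun a b => by
    have := hC a b
    have : |‖a + b‖ ^ r - ‖a‖ ^ r - ‖b‖ ^ r| ≤ |‖a + b‖ ^ r - ‖a‖ ^ r| + ‖b‖ ^ r := by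
      simpa [abs_of_nonneg (by positivity : 0 ≤ ‖b‖ ^ r)] using abs_sub _ (‖b‖ ^ r)
    linarith
  set W : ℕ → α → ℝ := fun n x => max (φ (f n x) (g x) - ε * ‖f n x‖ ^ r) 0
  have hW_meas : ∀ n, AEStronglyMeasurable (W n) μ := fun n =>
    Continuous.comp_aestronglyMeasurable₂ (g := fun a b => max (φ a b - ε * ‖a‖ ^ r) 0)
      (by fun_prop (disch := exact hr0)) (hfm n) hgm
  have hW_bound : ∀ n, ∀ᵐ x ∂μ, ‖W n x‖ ≤ (C + 1) * ‖g x‖ ^ r := fun n => .of_forall fun x => by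
    rw [Real.norm_of_nonneg (le_max_right _ _)]
    exact max_le (by linarith [hφ_le (f n x) (g x)]) (by positivity)
  have hW_lim : ∀ᵐ x ∂μ, Tendsto (fun n => W n x) atTop (𝓝 0) := by
    filter_upwards [hf0] with x hx
    have : Continuous fun a => max (φ a (g x) - ε * ‖a‖ ^ r) 0 := by fun_prop (disch := exact hr0)
    simpa [φ, W, Function.comp_def, Real.zero_rpow (by linarith : r ≠ 0)] using
      (this.tendsto 0).comp hx
  have hdom : Integrable (fun x => (C + 1) * ‖g x‖ ^ r) μ := hgi.const_mul _
  refine ⟨fun n => ∫ x, W n x ∂μ, ?_, .of_forall fun n => ?_⟩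
  · simpa using tendsto_integral_of_dominated_convergence _ hW_meas hdom hW_bound hW_lim
  · have hW_int : Integrable (W n) μ := hdom.mono' (hW_meas n) (hW_bound n)
    have hφ_int : Integrable (fun x => φ (f n x) (g x)) μ :=
      ((hfi n).const_mul ε |>.add hdom).mono' (hφ_cont.comp_aestronglyMeasurable₂ (hfm n) hgm)
        (.of_forall fun x => (Real.norm_of_nonneg (abs_nonneg _)).trans_le (hφ_le _ _))
    rw [abs_of_nonneg (integral_nonneg fun x => abs_nonneg _)]
    calc ∫ x, φ (f n x) (g x) ∂μ ≤ ∫ x, W n x + ε * ‖f n x‖ ^ r ∂μ :=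
          integral_mono hφ_int (hW_int.add ((hfi n).const_mul ε)) fun x => by
            linarith [le_max_left (φ (f n x) (g x) - ε * ‖f n x‖ ^ r) 0]
      _ = ∫ x, W n x ∂μ + ε * ∫ x, ‖f n x‖ ^ r ∂μ := by
          rw [integral_add hW_int ((hfi n).const_mul ε), integral_const_mul]
      _ ≤ ε * K + ∫ x, W n x ∂μ := by linarith [mul_le_mul_of_nonneg_left (hfK n) hε.le]

theorem MemLp.integrable_norm_rpow_ofReal (hr : 0 < r) {u : α → E}
    (hu : MemLp u (ENNReal.ofReal r) μ) : Integrable (fun x => ‖u x‖ ^ r) μ := by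
  simpa [hr.le] using hu.integrable_norm_rpow (by simpa using hr) ofReal_ne_top

theorem MemLp.toReal_eLpNorm_rpow_eq_integral (hr : 0 < r) {u : α → E}
    (hu : MemLp u (ENNReal.ofReal r) μ) :
    (eLpNorm u (ENNReal.ofReal r) μ).toReal ^ r = ∫ x, ‖u x‖ ^ r ∂μ := by
  rw [toReal_eLpNorm hu.1, lpNorm_eq_integral_norm_rpow_toReal (by simpa using hr) ofReal_ne_top
    hu.1, toReal_ofReal hr.le, Real.rpow_inv_rpow (integral_nonneg fun x => by positivity) hr.ne']

theorem tendsto_toReal_eLpNorm_rpow_sub {ι : Type*} {l : Filter ι} (hr : 1 ≤ r) {u v : ι → α → E}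
    (hu : ∀ i, MemLp (u i) (ENNReal.ofReal r) μ) (hv : ∀ i, MemLp (v i) (ENNReal.ofReal r) μ)
    {C : ℝ≥0∞} (hC : C ≠ ∞) (hvC : ∀ i, eLpNorm (v i) (ENNReal.ofReal r) μ ≤ C)
    (huv : Tendsto (fun i => eLpNorm (u i - v i) (ENNReal.ofReal r) μ) l (𝓝 0)) :
    Tendsto (fun i => (eLpNorm (u i) (ENNReal.ofReal r) μ).toReal ^ r -
      (eLpNorm (v i) (ENNReal.ofReal r) μ).toReal ^ r) l (𝓝 0) := by
  have : Fact (1 ≤ ENNReal.ofReal r) := ⟨by simpa using ofReal_le_ofReal hr⟩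
  simpa only [Lp.norm_toLp] using tendsto_norm_rpow_sub_norm_rpow hr
    (u := fun i => (hu i).toLp) (v := fun i => (hv i).toLp) (M := C.toReal)
    (fun i => (Lp.norm_toLp _ _).trans_le (toReal_mono hC (hvC i)))
    (by simpa only [← MemLp.toLp_sub, Lp.norm_toLp, Function.comp_def, toReal_zero] using
      (ENNReal.tendsto_toReal zero_ne_top).comp huv)

theorem tendsto_toReal_eLpNorm_add_rpow_sub (hr : 1 ≤ r) {f : ℕ → α → E} {g : α → E}
    (hf : ∀ n, MemLp (f n) (ENNReal.ofReal r) μ) {C : ℝ≥0∞} (hC : C ≠ ∞)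
    (hfC : ∀ n, eLpNorm (f n) (ENNReal.ofReal r) μ ≤ C) (hg : MemLp g (ENNReal.ofReal r) μ)
    (hf0 : ∀ᵐ x ∂μ, Tendsto (fun n => f n x) atTop (𝓝 0)) :
    Tendsto (fun n => (eLpNorm (f n + g) (ENNReal.ofReal r) μ).toReal ^ r -
      (eLpNorm (f n) (ENNReal.ofReal r) μ).toReal ^ r -
      (eLpNorm g (ENNReal.ofReal r) μ).toReal ^ r) atTop (𝓝 0) := by
  have hr0 : 0 < r := by linarith
  have hfK : ∀ n, ∫ x, ‖f n x‖ ^ r ∂μ ≤ C.toReal ^ r := fun n => by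
    rw [← (hf n).toReal_eLpNorm_rpow_eq_integral hr0]
    exact Real.rpow_le_rpow toReal_nonneg (toReal_mono hC (hfC n)) hr0.le
  refine squeeze_zero_norm (fun n => ?_) (tendsto_integral_abs_norm_add_rpow_sub hr
    (fun n => (hf n).1) (fun n => (hf n).integrable_norm_rpow_ofReal hr0) hfK hg.1
    (hg.integrable_norm_rpow_ofReal hr0) hf0)
  have hfg := ((hf n).add hg).integrable_norm_rpow_ofReal hr0
  have hfn := (hf n).integrable_norm_rpow_ofReal hr0
  have hgn := hg.integrable_norm_rpow_ofReal hr0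
  rw [((hf n).add hg).toReal_eLpNorm_rpow_eq_integral hr0,
    (hf n).toReal_eLpNorm_rpow_eq_integral hr0, hg.toReal_eLpNorm_rpow_eq_integral hr0,
    ← integral_sub hfg hfn,
    ← integral_sub (f := fun x => ‖(f n + g) x‖ ^ r - ‖f n x‖ ^ r) (hfg.sub hfn) hgn]
  exact norm_integral_le_integral_norm _

end MeasureTheory

/-- Brézis–Lieb lemma for a sum of two sequences: if `(f_n)`, `(g_n)` are bounded
in `L^r`, `g_n` converges in `L^r` and a.e., and `f_n → 0` a.e., then
`‖f_n+g_n‖_r^r = ‖f_n‖_r^r + ‖g_n‖_r^r + o(1)`. -/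
theorem brezis_lieb_sum (r : ℝ) (hr1 : 1 < r)
    (f g : ℕ → ℝ → ℂ) (glim : ℝ → ℂ)
    (hfm : ∀ n, AEStronglyMeasurable (f n) (volume : Measure ℝ))
    (hgm : ∀ n, AEStronglyMeasurable (g n) (volume : Measure ℝ))
    (hbound : ∃ C : ℝ≥0∞, C < ⊤ ∧ ∀ n,
      eLpNorm (f n) (ENNReal.ofReal r) (volume : Measure ℝ) ≤ C ∧
      eLpNorm (g n) (ENNReal.ofReal r) (volume : Measure ℝ) ≤ C)
    (hgLr : Tendsto (fun n => eLpNorm (g n - glim) (ENNReal.ofReal r) (volume : Measure ℝ))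
      atTop (nhds 0))
    (hgae : ∀ᵐ x : ℝ, Tendsto (fun n => g n x) atTop (nhds (glim x)))
    (hfae : ∀ᵐ x : ℝ, Tendsto (fun n => f n x) atTop (nhds 0)) :
    Tendsto (fun n =>
        (eLpNorm (f n + g n) (ENNReal.ofReal r) (volume : Measure ℝ)).toReal ^ r -
        (eLpNorm (f n) (ENNReal.ofReal r) (volume : Measure ℝ)).toReal ^ r -
        (eLpNorm (g n) (ENNReal.ofReal r) (volume : Measure ℝ)).toReal ^ r)
      atTop (nhds 0) := by
  obtain ⟨C, hC, hfgC⟩ := hbound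
  have hr : 1 ≤ r := hr1.le
  have hf : ∀ n, MemLp (f n) (ENNReal.ofReal r) volume := fun n =>
    ⟨hfm n, (hfgC n).1.trans_lt hC⟩
  have hg : ∀ n, MemLp (g n) (ENNReal.ofReal r) volume := fun n =>
    ⟨hgm n, (hfgC n).2.trans_lt hC⟩
  have hglim : MemLp glim (ENNReal.ofReal r) volume := by
    obtain ⟨n, hn⟩ := (hgLr.eventually (gt_mem_nhds one_pos)).exists
    have hdiff : MemLp (g n - glim) (ENNReal.ofReal r) volume :=
      ⟨(hgm n).sub (aestronglyMeasurable_of_tendsto_ae atTop hgm hgae), hn.trans one_lt_top⟩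
    simpa using (hg n).sub hdiff
  have hgap : Tendsto (fun n => eLpNorm (glim - g n) (ENNReal.ofReal r) volume) atTop (𝓝 0) := by
    simpa only [eLpNorm_sub_comm] using hgLr
  have hfixed := tendsto_toReal_eLpNorm_add_rpow_sub hr hf hC.ne (fun n => (hfgC n).1) hglim hfae
  have hshift := tendsto_toReal_eLpNorm_rpow_sub hr (fun n => (hf n).add hglim)
    (fun n => (hf n).add (hg n)) (add_ne_top.2 ⟨hC.ne, hC.ne⟩)
    (fun n => (eLpNorm_add_le (hfm n) (hgm n) (by simpa using ofReal_le_ofReal hr)).trans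
      (add_le_add (hfgC n).1 (hfgC n).2))
    (by simpa only [add_sub_add_left_eq_sub] using hgap)
  have hlim :=
    tendsto_toReal_eLpNorm_rpow_sub hr (fun _ => hglim) hg hC.ne (fun n => (hfgC n).2) hgap
  simpa using ((hfixed.sub hshift).add hlim).congr fun n => by ring
end

section
/- Let a : ℝ → ℝ be smooth with a ≥ a₀ > 0, suppose x·a'(x) ≤ (6/5 − δ)·a(x) for some δ > 0 and all x, and let R > 0. Then for |x| ≤ R the quantity I(x) = a(x)(4 − 2x²/R²) − 2a'(x)·x·(1 − x²/(6R²)) satisfies I(x) ≥ (δ/5)·a(x) ≥ (δ/5)·a₀ > 0. -/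
/-- First coefficient positivity estimate in the virial identity. -/
theorem virial_coefficient_I (a : ℝ → ℝ) (a₀ δ R : ℝ)
    (ha : ContDiff ℝ (⊤ : ℕ∞) a) (ha₀ : 0 < a₀) (hlow : ∀ x, a₀ ≤ a x) (hδ : 0 < δ)
    (hgrowth : ∀ x : ℝ, x * deriv a x ≤ (6 / 5 - δ) * a x) (hR : 0 < R) :
    ∀ x : ℝ, |x| ≤ R →
      δ / 5 * a₀ ≤ δ / 5 * a x ∧
      δ / 5 * a x ≤
        a x * (4 - 2 * x ^ 2 / R ^ 2) - 2 * deriv a x * x * (1 - x ^ 2 / (6 * R ^ 2)) ∧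
      0 < δ / 5 * a₀ := by
  intro x hx
  have hR2 : (0:ℝ) < R ^ 2 := by positivity
  have habs := abs_le.mp hx
  have hs : x ^ 2 ≤ R ^ 2 := by nlinarith [habs.1, habs.2]
  have hA : 0 < a x := lt_of_lt_of_le ha₀ (hlow x)
  set t : ℝ := x ^ 2 / R ^ 2 with ht
  have ht0 : 0 ≤ t := by positivity
  have ht1 : t ≤ 1 := by
    rw [ht, div_le_one hR2]; exact hs
  have heq : x ^ 2 / (6 * R ^ 2) = t / 6 := by
    rw [ht]; field_simp
  have hw0 : (0:ℝ) ≤ 1 - t / 6 := by linarith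
  have key : 2 * deriv a x * x * (1 - t / 6) ≤ 2 * ((6 / 5 - δ) * a x) * (1 - t / 6) := by
    have h := hgrowth x
    nlinarith [mul_le_mul_of_nonneg_right h hw0]
  refine ⟨by nlinarith [hlow x], ?_, by positivity⟩
  rw [heq, show 2 * x ^ 2 / R ^ 2 = 2 * t by rw [ht]; ring]
  nlinarith [key, mul_nonneg hA.le (by linarith : (0:ℝ) ≤ 1 - t),
    mul_nonneg (mul_nonneg hδ.le hA.le) (by linarith : (0:ℝ) ≤ 1 - t),
    mul_nonneg (mul_nonneg hδ.le hA.le) ht0, mul_pos hδ hA]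
end
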